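/- If u ∈ ℂ^N is such that T(u) = Σ_{k=1}^r p_k a(f_k) a(f_k)ᴴ with p_k > 0 and distinct f_k (a Vandermonde decomposition of rank r ≤ N), and Y = Σ_{k=1}^r c_k a(f_k) φ_k with c_k > 0 and unit-norm φ_k, then there exists W ∈ ℂ^{L×L} such that U = [[W, Yᴴ],[Y, T(u)]] is positive semidefinite with rank(U) = r. -/

import Mathlib

open Complex Matrix Finset
open scoped ComplexOrder

/-- The atom `a(f) = (1, e^{i2πf}, …, e^{i2π(N-1)f})` as a vector in `ℂ^N`. -/
noncomputable def atom (N : ℕ) (f : ℝ) : Fin N → ℂ :=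
  fun j => Complex.exp (2 * Real.pi * Complex.I * ((j : ℕ) : ℂ) * (f : ℂ))

/-- Restriction of the atom to the index set `Ω`. -/
noncomputable def atomRes (N : ℕ) (Ω : Finset (Fin N)) (f : ℝ) : Ω → ℂ :=
  fun m => atom N f (m : Fin N)

/-- Spark of the continuous dictionary `A¹_Ω`: the smallest number of distinct atoms
`a_Ω(f)` with `f ∈ [0,1)` that are linearly dependent. -/
noncomputable def spark (N : ℕ) (Ω : Finset (Fin N)) : ℕ :=
  sInf {k | ∃ S : Finset ℝ, S.card = k ∧ (↑S : Set ℝ) ⊆ Set.Ico (0 : ℝ) 1 ∧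
    ¬ LinearIndependent ℂ (fun f : S => atomRes N Ω (f : ℝ))}

/-- The Hermitian Toeplitz matrix `T(u)` with first row `uᵀ`. -/
noncomputable def Toep (N : ℕ) (u : Fin N → ℂ) : Matrix (Fin N) (Fin N) ℂ :=
  fun j k =>
    if _h : (j : ℕ) ≤ (k : ℕ) then
      u ⟨(k : ℕ) - (j : ℕ), Nat.lt_of_le_of_lt (Nat.sub_le _ _) k.isLt⟩
    else
      (starRingEnd ℂ) (u ⟨(j : ℕ) - (k : ℕ), Nat.lt_of_le_of_lt (Nat.sub_le _ _) j.isLt⟩)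

/-- The block matrix `U = [[W, Yᴴ],[Y, T(u)]]`. -/
noncomputable def blockU (N L : ℕ) (W : Matrix (Fin L) (Fin L) ℂ)
    (Y : Matrix (Fin N) (Fin L) ℂ) (u : Fin N → ℂ) :
    Matrix (Fin L ⊕ Fin N) (Fin L ⊕ Fin N) ℂ :=
  Matrix.fromBlocks W Yᴴ Y (Toep N u)

/-!
Let `A` be the matrix whose columns are the atoms `a(f_k)` and `D = diag(p)`. The hypotheses say
`T(u) = A D Aᴴ` and `Y = A D C`, where `C` has rows `(c_k / p_k) φ_k`. Taking `W = Cᴴ D C` gives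
`U = V D Vᴴ` for `V = [Cᴴ; A]`, so `U` is positive semidefinite, and its rank is the column rank
of `V`. That rank is `r` because the first `r` rows of `A` form the Vandermonde matrix of the
distinct nodes `e^{i2πf_k}`.
-/

lemma injOn_exp_two_pi_I_mul_Ico :
    Set.InjOn (fun x : ℝ => cexp (2 * Real.pi * I * x)) (Set.Ico 0 1) := by
  intro x hx y hy hxy
  have hcirc : Circle.exp (2 * Real.pi * x) = Circle.exp (2 * Real.pi * y) := by
    ext1
    simp only [Circle.coe_exp]
    push_cast
    convert hxy using 2 <;> ring
  have hmem : ∀ t ∈ Set.Ico (0 : ℝ) 1, 2 * Real.pi * t ∈ Set.Ico 0 (2 * Real.pi) := by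
    intro t ⟨h0, h1⟩
    constructor <;> nlinarith [Real.pi_pos]
  exact mul_left_cancel₀ (by positivity)
    (Circle.exp_injOn_Ico (by simp) (hmem x hx) (hmem y hy) hcirc)

namespace Matrix

variable {m n : Type*} [Fintype n]

lemma mulVec_injective_of_pow {K : Type*} [Field K] {r N : ℕ} (hr : r ≤ N) {z : Fin r → K}
    (hz : Function.Injective z) :
    Function.Injective (of fun (j : Fin N) (k : Fin r) => z k ^ (j : ℕ)).mulVec := by
  have hsub : (of fun (j : Fin N) (k : Fin r) => z k ^ (j : ℕ)).submatrix (Fin.castLE hr) id =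
      (vandermonde z)ᵀ := by
    ext j k
    simp [vandermonde]
  have hunit : IsUnit (vandermonde z)ᵀ := by
    rw [isUnit_iff_isUnit_det, det_transpose, isUnit_iff_ne_zero]
    exact det_vandermonde_ne_zero_iff.mpr hz
  intro x y hxy
  apply mulVec_injective_iff_isUnit.mpr hunit
  rw [← hsub]
  ext j
  exact congrFun hxy _

lemma rank_eq_card_of_mulVec_injective {K : Type*} [Field K] {V : Matrix m n K}
    (hV : Function.Injective V.mulVec) : V.rank = Fintype.card n := by
  rw [rank, LinearMap.finrank_range_of_inj hV, Module.finrank_fintype_fun_eq_card]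

lemma rank_mul_diagonal_mul_conjTranspose {𝕜 : Type*} [RCLike 𝕜] [Fintype m] [DecidableEq n]
    {V : Matrix m n 𝕜} (hV : Function.Injective V.mulVec) {d : n → ℝ} (hd : ∀ k, 0 < d k) :
    (V * diagonal (fun k => (d k : 𝕜)) * Vᴴ).rank = Fintype.card n := by
  set S : Matrix n n 𝕜 := diagonal fun k => (√(d k) : 𝕜)
  have hS : S * Sᴴ = diagonal (fun k => (d k : 𝕜)) := by
    simp [S, diagonal_conjTranspose, diagonal_mul_diagonal, ← RCLike.ofReal_mul,
      Real.mul_self_sqrt (hd _).le]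
  have hdetS : IsUnit S.det := by
    simp [S, det_diagonal, Finset.prod_ne_zero_iff, fun k => (Real.sqrt_pos.mpr (hd k)).ne']
  have hfactor : V * (S * Sᴴ) * Vᴴ = V * S * (V * S)ᴴ := by
    simp [conjTranspose_mul, Matrix.mul_assoc]
  rw [← hS, hfactor, rank_self_mul_conjTranspose, rank_mul_eq_left_of_isUnit_det _ _ hdetS,
    rank_eq_card_of_mulVec_injective hV]

lemma fromRows_mul_mul_conjTranspose_fromRows {R m₁ m₂ : Type*} [CommRing R] [StarRing R]
    (B : Matrix m₁ n R) (A : Matrix m₂ n R) (D : Matrix n n R) :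
    fromRows B A * D * (fromRows B A)ᴴ =
      fromBlocks (B * D * Bᴴ) (B * D * Aᴴ) (A * D * Bᴴ) (A * D * Aᴴ) := by
  rw [fromRows_mul, conjTranspose_fromRows_eq_fromCols_conjTranspose, fromRows_mul_fromCols]

end Matrix

lemma atom_eq_pow (N : ℕ) (f : ℝ) (j : Fin N) :
    atom N f j = cexp (2 * Real.pi * I * f) ^ (j : ℕ) := by
  rw [atom, ← Complex.exp_nat_mul]
  ring_nf

noncomputable def atomMatrix (N : ℕ) {r : ℕ} (f : Fin r → ℝ) : Matrix (Fin N) (Fin r) ℂ :=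
  of fun j k => atom N (f k) j

lemma atomMatrix_mulVec_injective {N r : ℕ} (hr : r ≤ N) {f : Fin r → ℝ}
    (hf : ∀ k, f k ∈ Set.Ico (0 : ℝ) 1) (hfdist : Function.Injective f) :
    Function.Injective (atomMatrix N f).mulVec := by
  have hnodes : Function.Injective fun k => cexp (2 * Real.pi * I * f k) :=
    fun a b hab => hfdist (injOn_exp_two_pi_I_mul_Ico (hf a) (hf b) hab)
  convert mulVec_injective_of_pow hr hnodes using 2
  ext j k
  exact atom_eq_pow N (f k) j

theorem lowrank_embedding_of_atomic_decomposition_general (N L r : ℕ) (u : Fin N → ℂ)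
    (p : Fin r → ℝ) (c : Fin r → ℝ) (f : Fin r → ℝ) (φ : Fin r → Fin L → ℂ)
    (hp : ∀ k, 0 < p k)
    (hf : ∀ k, f k ∈ Set.Ico (0 : ℝ) 1) (hfdist : Function.Injective f)
    (hr : r ≤ N)
    (hT : ∀ i j, Toep N u i j = ∑ k, (p k : ℂ) * atom N (f k) i * star (atom N (f k) j))
    (Y : Matrix (Fin N) (Fin L) ℂ)
    (hY : ∀ j l, Y j l = ∑ k, (c k : ℂ) * atom N (f k) j * φ k l) :
    ∃ W : Matrix (Fin L) (Fin L) ℂ,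
      (blockU N L W Y u).PosSemidef ∧ (blockU N L W Y u).rank = r := by
  set A := atomMatrix N f
  set D : Matrix (Fin r) (Fin r) ℂ := diagonal fun k => (p k : ℂ)
  set C : Matrix (Fin r) (Fin L) ℂ := of fun k l => (c k : ℂ) / p k * φ k l
  have hToep : Toep N u = A * D * Aᴴ := by
    ext i j
    rw [hT, mul_apply]
    simp [A, D, atomMatrix, mul_diagonal, mul_comm]
  have hYA : Y = A * D * C := by
    ext j l
    rw [hY, mul_apply]
    refine Finset.sum_congr rfl fun k _ => ?_
    simp only [A, D, C, atomMatrix, mul_diagonal, of_apply]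
    field_simp [ofReal_ne_zero.mpr (hp k).ne']
  have hU : blockU N L (Cᴴ * D * C) Y u = fromRows Cᴴ A * D * (fromRows Cᴴ A)ᴴ := by
    rw [blockU, fromRows_mul_mul_conjTranspose_fromRows, hToep, hYA]
    simp [D, conjTranspose_mul, diagonal_conjTranspose, Matrix.mul_assoc, Pi.star_def]
  refine ⟨Cᴴ * D * C, hU ▸ ?_, hU ▸ ?_⟩
  · have hD : D.PosSemidef := posSemidef_diagonal_iff.mpr fun k => by simpa using (hp k).le
    exact hD.mul_mul_conjTranspose_same _
  · have hinj : Function.Injective (fromRows Cᴴ A).mulVec := fun x y hxy =>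
      atomMatrix_mulVec_injective hr hf hfdist
        (Sum.elim_eq_iff.mp (by rwa [fromRows_mulVec, fromRows_mulVec] at hxy)).2
    exact (rank_mul_diagonal_mul_conjTranspose hinj hp).trans (Fintype.card_fin r)

/-- from a rank-`r` Vandermonde decomposition of `T(u)` and a matching
`r`-atom decomposition of `Y`, one can build `W` so that `U = [[W,Yᴴ],[Y,T(u)]]` is
PSD with `rank(U) = r`. -/
theorem lowrank_embedding_of_atomic_decomposition (N L r : ℕ) (u : Fin N → ℂ)
    (p : Fin r → ℝ) (c : Fin r → ℝ) (f : Fin r → ℝ) (φ : Fin r → Fin L → ℂ)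
    (hp : ∀ k, 0 < p k) (hc : ∀ k, 0 < c k)
    (hf : ∀ k, f k ∈ Set.Ico (0 : ℝ) 1) (hfdist : Function.Injective f)
    (hr : r ≤ N)
    (hφ : ∀ k, ∑ l, Complex.normSq (φ k l) = 1)
    (hT : ∀ i j, Toep N u i j = ∑ k, (p k : ℂ) * atom N (f k) i * star (atom N (f k) j))
    (Y : Matrix (Fin N) (Fin L) ℂ)
    (hY : ∀ j l, Y j l = ∑ k, (c k : ℂ) * atom N (f k) j * φ k l) :
    ∃ W : Matrix (Fin L) (Fin L) ℂ,
      (blockU N L W Y u).PosSemidef ∧ (blockU N L W Y u).rank = r :=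
  lowrank_embedding_of_atomic_decomposition_general N L r u p c f φ hp hf hfdist hr hT Y hY
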